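/- Let a₃ > 0 and a₂, a₁, a₀, ϱ ∈ ℝ with ϱ > 0. Suppose W, Z, G ≥ 0 are nonnegative reals satisfying 0 ≤ −a₃W⁴ + 3a₃W³Z + a₃WZ³ + |a₂|W³G + 2|a₂|W²ZG + |a₂|WZ²G + |a₁|W²G² + |a₁|WZG² + |a₀|WG³ + (ϱ/2)W²G². If Z < W/5 and G < (W/5)·min{a₃/|a₂|, (a₃/|a₁|)^{1/2}, (a₃/|a₀|)^{1/3}, (a₃/ϱ)^{1/2}} (with the convention that a ratio with zero denominator is +∞), then W = 0. Consequently, for all W, Z, G ≥ 0 satisfying the displayed inequality, W ≤ 5Z + 5G·max{|a₂/a₃|, |a₁/a₃|^{1/2}, |a₀/a₃|^{1/3}, |ϱ/a₃|^{1/2}}. -/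
import Mathlib


theorem stmt_12 (a3 a2 a1 a0 ϱ : ℝ) (ha3 : 0 < a3) (hϱ : 0 < ϱ) :
    (∀ W Z G : ℝ, 0 ≤ W → 0 ≤ Z → 0 ≤ G →
      0 ≤ -a3 * W ^ 4 + 3 * a3 * W ^ 3 * Z + a3 * W * Z ^ 3
          + |a2| * W ^ 3 * G + 2 * |a2| * W ^ 2 * Z * G + |a2| * W * Z ^ 2 * G
          + |a1| * W ^ 2 * G ^ 2 + |a1| * W * Z * G ^ 2 + |a0| * W * G ^ 3
          + (ϱ / 2) * W ^ 2 * G ^ 2 →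
      Z < W / 5 →
      |a2| * G < (W / 5) * a3 →
      |a1| * G ^ 2 < (W / 5) ^ 2 * a3 →
      |a0| * G ^ 3 < (W / 5) ^ 3 * a3 →
      ϱ * G ^ 2 < (W / 5) ^ 2 * a3 →
      W = 0) ∧
    (∀ W Z G : ℝ, 0 ≤ W → 0 ≤ Z → 0 ≤ G →
      0 ≤ -a3 * W ^ 4 + 3 * a3 * W ^ 3 * Z + a3 * W * Z ^ 3
          + |a2| * W ^ 3 * G + 2 * |a2| * W ^ 2 * Z * G + |a2| * W * Z ^ 2 * G
          + |a1| * W ^ 2 * G ^ 2 + |a1| * W * Z * G ^ 2 + |a0| * W * G ^ 3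
          + (ϱ / 2) * W ^ 2 * G ^ 2 →
      W ≤ 5 * Z + 5 * G *
        max (max |a2 / a3| (|a1 / a3| ^ ((1 : ℝ) / 2)))
            (max (|a0 / a3| ^ ((1 : ℝ) / 3)) (|ϱ / a3| ^ ((1 : ℝ) / 2)))) := by
  have ha3' : (0:ℝ) ≤ a3 := ha3.le
  have key : ∀ W Z G : ℝ, 0 ≤ W → 0 ≤ Z → 0 ≤ G →
      0 ≤ -a3 * W ^ 4 + 3 * a3 * W ^ 3 * Z + a3 * W * Z ^ 3
          + |a2| * W ^ 3 * G + 2 * |a2| * W ^ 2 * Z * G + |a2| * W * Z ^ 2 * G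
          + |a1| * W ^ 2 * G ^ 2 + |a1| * W * Z * G ^ 2 + |a0| * W * G ^ 3
          + (ϱ / 2) * W ^ 2 * G ^ 2 →
      Z < W / 5 →
      |a2| * G < (W / 5) * a3 →
      |a1| * G ^ 2 < (W / 5) ^ 2 * a3 →
      |a0| * G ^ 3 < (W / 5) ^ 3 * a3 →
      ϱ * G ^ 2 < (W / 5) ^ 2 * a3 →
      W = 0 := by
    intro W Z G hW0 hZ0 hG0 hmain h1 h2 h3 h4 h5
    by_contra hne
    have hW : 0 < W := hW0.lt_of_ne (Ne.symm hne)
    have hZ' : Z ≤ W / 5 := h1.le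
    have t1 : 3 * a3 * W ^ 3 * Z ≤ 3 * a3 * W ^ 3 * (W / 5) := by
      have := mul_le_mul_of_nonneg_left hZ' (by positivity : (0:ℝ) ≤ 3 * a3 * W ^ 3)
      linarith
    have t2 : a3 * W * Z ^ 3 ≤ a3 * W * (W / 5) ^ 3 := by
      have h := pow_le_pow_left₀ hZ0 hZ' 3
      have := mul_le_mul_of_nonneg_left h (by positivity : (0:ℝ) ≤ a3 * W)
      linarith
    have t3 : |a2| * W ^ 3 * G ≤ (W / 5) * a3 * W ^ 3 := by
      have := mul_le_mul_of_nonneg_right h2.le (by positivity : (0:ℝ) ≤ W ^ 3)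
      linarith
    have t4 : 2 * |a2| * W ^ 2 * Z * G ≤ 2 * ((W / 5) * a3) * (W ^ 2 * (W / 5)) := by
      have hb : |a2| * G * Z ≤ ((W / 5) * a3) * (W / 5) :=
        mul_le_mul h2.le hZ' hZ0 (by positivity)
      have := mul_le_mul_of_nonneg_left hb (by positivity : (0:ℝ) ≤ 2 * W ^ 2)
      linarith
    have t5 : |a2| * W * Z ^ 2 * G ≤ ((W / 5) * a3) * (W * (W / 5) ^ 2) := by
      have hb : |a2| * G * Z ^ 2 ≤ ((W / 5) * a3) * ((W / 5) ^ 2) :=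
        mul_le_mul h2.le (pow_le_pow_left₀ hZ0 hZ' 2) (by positivity) (by positivity)
      have := mul_le_mul_of_nonneg_left hb hW0
      linarith
    have t6 : |a1| * W ^ 2 * G ^ 2 ≤ ((W / 5) ^ 2 * a3) * W ^ 2 := by
      have := mul_le_mul_of_nonneg_right h3.le (by positivity : (0:ℝ) ≤ W ^ 2)
      linarith
    have t7 : |a1| * W * Z * G ^ 2 ≤ ((W / 5) ^ 2 * a3) * (W * (W / 5)) := by
      have hb : |a1| * G ^ 2 * Z ≤ ((W / 5) ^ 2 * a3) * (W / 5) :=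
        mul_le_mul h3.le hZ' hZ0 (by positivity)
      have := mul_le_mul_of_nonneg_left hb hW0
      linarith
    have t8 : |a0| * W * G ^ 3 ≤ ((W / 5) ^ 3 * a3) * W := by
      have := mul_le_mul_of_nonneg_right h4.le hW0
      linarith
    have t9 : (ϱ / 2) * W ^ 2 * G ^ 2 ≤ ((W / 5) ^ 2 * a3) * (W ^ 2 / 2) := by
      have := mul_le_mul_of_nonneg_right h5.le (by positivity : (0:ℝ) ≤ W ^ 2 / 2)
      linarith
    have hpos : 0 < a3 * W ^ 4 := by positivity
    linarith
  refine ⟨key, ?_⟩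
  intro W Z G hW0 hZ0 hG0 hmain
  by_contra hlt
  push_neg at hlt
  set M := max (max |a2 / a3| (|a1 / a3| ^ ((1 : ℝ) / 2)))
      (max (|a0 / a3| ^ ((1 : ℝ) / 3)) (|ϱ / a3| ^ ((1 : ℝ) / 2))) with hMdef
  have hM2 : |a2 / a3| ≤ M := le_max_of_le_left (le_max_left _ _)
  have hM1 : |a1 / a3| ^ ((1 : ℝ) / 2) ≤ M := le_max_of_le_left (le_max_right _ _)
  have hMa0 : |a0 / a3| ^ ((1 : ℝ) / 3) ≤ M := le_max_of_le_right (le_max_left _ _)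
  have hMϱ : |ϱ / a3| ^ ((1 : ℝ) / 2) ≤ M := le_max_of_le_right (le_max_right _ _)
  have hMnn : 0 ≤ M := le_trans (abs_nonneg _) hM2
  have hWpos : 0 < W :=
    lt_of_le_of_lt (by positivity : (0:ℝ) ≤ 5 * Z + 5 * G * M) hlt
  have hGMnn : 0 ≤ G * M := mul_nonneg hG0 hMnn
  have hZlt : Z < W / 5 := by linarith
  have hGM : G * M < W / 5 := by linarith
  -- a2 bound
  have c2 : |a2| * G < (W / 5) * a3 := by
    have h : |a2| / a3 ≤ M := by rwa [abs_div, abs_of_pos ha3] at hM2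
    have hA : |a2| ≤ M * a3 := (div_le_iff₀ ha3).mp h
    have hB := mul_le_mul_of_nonneg_right hA hG0
    have hC := mul_lt_mul_of_pos_right hGM ha3
    linarith
  -- squares and cube of GM
  have hGMsq : (G * M) ^ 2 < (W / 5) ^ 2 :=
    pow_lt_pow_left₀ hGM hGMnn (by norm_num)
  have hGMcu : (G * M) ^ 3 < (W / 5) ^ 3 :=
    pow_lt_pow_left₀ hGM hGMnn (by norm_num)
  -- a1 bound
  have c1 : |a1| * G ^ 2 < (W / 5) ^ 2 * a3 := by
    have hsq : (|a1 / a3| ^ ((1 : ℝ) / 2)) ^ 2 = |a1 / a3| := by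
      rw [← Real.rpow_natCast (|a1 / a3| ^ ((1 : ℝ) / 2)) 2,
        ← Real.rpow_mul (abs_nonneg _)]
      norm_num
    have hM1sq : |a1| / a3 ≤ M ^ 2 := by
      have := pow_le_pow_left₀ (Real.rpow_nonneg (abs_nonneg _) _) hM1 2
      rw [hsq, abs_div, abs_of_pos ha3] at this
      exact this
    have hA : |a1| ≤ M ^ 2 * a3 := (div_le_iff₀ ha3).mp hM1sq
    have hB := mul_le_mul_of_nonneg_right hA (by positivity : (0:ℝ) ≤ G ^ 2)
    have hC := mul_lt_mul_of_pos_right hGMsq ha3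
    linarith
  -- a0 bound
  have c0 : |a0| * G ^ 3 < (W / 5) ^ 3 * a3 := by
    have hcu : (|a0 / a3| ^ ((1 : ℝ) / 3)) ^ 3 = |a0 / a3| := by
      rw [← Real.rpow_natCast (|a0 / a3| ^ ((1 : ℝ) / 3)) 3,
        ← Real.rpow_mul (abs_nonneg _)]
      norm_num
    have hMcu : |a0| / a3 ≤ M ^ 3 := by
      have := pow_le_pow_left₀ (Real.rpow_nonneg (abs_nonneg _) _) hMa0 3
      rw [hcu, abs_div, abs_of_pos ha3] at this
      exact this
    have hA : |a0| ≤ M ^ 3 * a3 := (div_le_iff₀ ha3).mp hMcu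
    have hB := mul_le_mul_of_nonneg_right hA (by positivity : (0:ℝ) ≤ G ^ 3)
    have hC := mul_lt_mul_of_pos_right hGMcu ha3
    linarith
  -- ϱ bound
  have cϱ : ϱ * G ^ 2 < (W / 5) ^ 2 * a3 := by
    have hsq : (|ϱ / a3| ^ ((1 : ℝ) / 2)) ^ 2 = |ϱ / a3| := by
      rw [← Real.rpow_natCast (|ϱ / a3| ^ ((1 : ℝ) / 2)) 2,
        ← Real.rpow_mul (abs_nonneg _)]
      norm_num
    have hMsq : ϱ / a3 ≤ M ^ 2 := by
      have := pow_le_pow_left₀ (Real.rpow_nonneg (abs_nonneg _) _) hMϱ 2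
      rw [hsq, abs_of_pos (div_pos hϱ ha3)] at this
      exact this
    have hA : ϱ ≤ M ^ 2 * a3 := (div_le_iff₀ ha3).mp hMsq
    have hB := mul_le_mul_of_nonneg_right hA (by positivity : (0:ℝ) ≤ G ^ 2)
    have hC := mul_lt_mul_of_pos_right hGMsq ha3
    linarith
  exact hWpos.ne' (key W Z G hW0 hZ0 hG0 hmain hZlt c2 c1 c0 cϱ)
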